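/- arXiv:2308.01288 — 7 statements merged into one kernel-verified Lean document; each statement's English description precedes it below -/
import Mathlib

section
/- Let a₁,…,a_{3m-2} be the entries of the bidiagonal factors L₁, L₂, U of a bidiagonal factorization T = L₁L₂U where L₁, L₂ are lower unitriangular m×m matrices with subdiagonal entries (a₂, a₅, …, a_{3m-4}) and (a₃, a₆, …, a_{3m-3}) respectively, and U is upper triangular with diagonal (a₁, a₄, …, a_{3m-2}) and superdiagonal entries all equal to 1. Then T is a tetradiagonal lower Hessenberg matrix with superdiagonal entries 1 and, for all valid indices, diagonal entries b₀ = a₁, b_{2n+1} = a_{6n+2}+a_{6n+3}+a_{6n+4}, b_{2n+2} = a_{6n+5}+a_{6n+6}+a_{6n+7}; first subdiagonal c₁ = a₁(a₂+a₃), c_{2n+2} = a_{6n+3}a_{6n+5} + a_{6n+4}(a_{6n+5}+a_{6n+6}), c_{2n+3} = a_{6n+6}a_{6n+8} + a_{6n+7}(a_{6n+8}+a_{6n+9}); second subdiagonal d_{2n+2} = a_{6n+1}a_{6n+3}a_{6n+5}, d_{2n+3} = a_{6n+4}a_{6n+6}a_{6n+8}. -/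
/-!
Left multiplication by a unit lower bidiagonal matrix adds `l (i-1)` times row `i-1` to row `i`,
an operation that makes sense for infinite matrices indexed by `ℕ` and commutes with taking the
leading `m × m` block (the factor is lower triangular). Hence `T` is the leading block of the
infinite product `L₁ L₂ U`, whose entries are computed once and for all by unfolding two such row
operations; the statement's parity split `b_{2n+1}, b_{2n+2}, …` is just the uniform formula
at `3k+1, 3k+2, 3k+3` read off for even and odd `k`.
-/

namespace Matrix

variable {R : Type*} [Semiring R]

def unitLowerBidiagonal (l : ℕ → R) : Matrix ℕ ℕ R := fun i j =>
  if i = j then 1 else if i = j + 1 then l j else 0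

def upperBidiagonal (d : ℕ → R) : Matrix ℕ ℕ R := fun i j =>
  if i = j then d i else if j = i + 1 then 1 else 0

/-- The product `unitLowerBidiagonal l * X`; it makes sense for infinite `X` because each row of
the left factor has at most two nonzero entries. -/
def unitLowerBidiagonalMul (l : ℕ → R) (X : Matrix ℕ ℕ R) : Matrix ℕ ℕ R
  | 0, j => X 0 j
  | i + 1, j => X (i + 1) j + l i * X i j

theorem submatrix_unitLowerBidiagonal_mul_submatrix {m : ℕ} (l : ℕ → R) (X : Matrix ℕ ℕ R) :
    ((unitLowerBidiagonal l).submatrix Fin.val Fin.val * X.submatrix Fin.val Fin.val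
      : Matrix (Fin m) (Fin m) R) = (unitLowerBidiagonalMul l X).submatrix Fin.val Fin.val := by
  ext ⟨i, hi⟩ j
  rw [mul_apply]
  rcases i with _ | i
  · rw [Fintype.sum_eq_single ⟨0, hi⟩]
    · simp [unitLowerBidiagonal, unitLowerBidiagonalMul]
    · rintro ⟨k, hk⟩ hne
      have hk₀ : k ≠ 0 := fun h => hne (Fin.ext h)
      simp [unitLowerBidiagonal, hk₀, hk₀.symm]
  · rw [Fintype.sum_eq_add ⟨i + 1, hi⟩ ⟨i, by omega⟩ (by simp [Fin.ext_iff])]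
    · simp [unitLowerBidiagonal, unitLowerBidiagonalMul]
    · rintro ⟨k, hk⟩ ⟨hne₁, hne₂⟩
      have h₁ : i + 1 ≠ k := fun h => hne₁ (Fin.ext h.symm)
      have h₂ : i ≠ k := fun h => hne₂ (Fin.ext h.symm)
      simp [unitLowerBidiagonal, h₁, h₂]

def bidiagonalProduct (l₁ l₂ d : ℕ → R) : Matrix ℕ ℕ R :=
  unitLowerBidiagonalMul l₁ (unitLowerBidiagonalMul l₂ (upperBidiagonal d))

variable (l₁ l₂ d : ℕ → R)

theorem submatrix_bidiagonalProduct (m : ℕ) :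
    (bidiagonalProduct l₁ l₂ d).submatrix Fin.val Fin.val
      = ((unitLowerBidiagonal l₁).submatrix Fin.val Fin.val
          * (unitLowerBidiagonal l₂).submatrix Fin.val Fin.val
          * (upperBidiagonal d).submatrix Fin.val Fin.val : Matrix (Fin m) (Fin m) R) := by
  rw [Matrix.mul_assoc, submatrix_unitLowerBidiagonal_mul_submatrix,
    submatrix_unitLowerBidiagonal_mul_submatrix, bidiagonalProduct]

theorem bidiagonalProduct_apply_self_succ (i : ℕ) : bidiagonalProduct l₁ l₂ d i (i + 1) = 1 := by
  rcases i with _ | _ | i <;>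
    simp +arith [bidiagonalProduct, unitLowerBidiagonalMul, upperBidiagonal]

theorem bidiagonalProduct_apply_eq_zero {i j : ℕ} (h : i + 1 < j ∨ j + 2 < i) :
    bidiagonalProduct l₁ l₂ d i j = 0 := by
  rcases i with _ | _ | i <;>
    simp only [bidiagonalProduct, unitLowerBidiagonalMul, upperBidiagonal] <;>
    split_ifs <;> first | omega | simp

theorem bidiagonalProduct_apply_zero_zero : bidiagonalProduct l₁ l₂ d 0 0 = d 0 := by
  simp [bidiagonalProduct, unitLowerBidiagonalMul, upperBidiagonal]

theorem bidiagonalProduct_apply_succ_succ (k : ℕ) :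
    bidiagonalProduct l₁ l₂ d (k + 1) (k + 1) = d (k + 1) + l₂ k + l₁ k := by
  rcases k with _ | k <;>
    simp +arith [bidiagonalProduct, unitLowerBidiagonalMul, upperBidiagonal]

theorem bidiagonalProduct_apply_one_zero :
    bidiagonalProduct l₁ l₂ d 1 0 = l₂ 0 * d 0 + l₁ 0 * d 0 := by
  simp [bidiagonalProduct, unitLowerBidiagonalMul, upperBidiagonal]

theorem bidiagonalProduct_apply_add_two_succ (k : ℕ) :
    bidiagonalProduct l₁ l₂ d (k + 2) (k + 1)
      = l₂ (k + 1) * d (k + 1) + l₁ (k + 1) * (d (k + 1) + l₂ k) := by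
  simp [bidiagonalProduct, unitLowerBidiagonalMul, upperBidiagonal]

theorem bidiagonalProduct_apply_add_two_self (k : ℕ) :
    bidiagonalProduct l₁ l₂ d (k + 2) k = l₁ (k + 1) * (l₂ k * d k) := by
  simp +arith [bidiagonalProduct, unitLowerBidiagonalMul, upperBidiagonal]

end Matrix

open Matrix

theorem bidiagonal_factorization_structure (m : ℕ) (a : ℕ → ℝ) :
    let L1 : Matrix (Fin m) (Fin m) ℝ := fun i j =>
      if (i : ℕ) = j then 1 else if (i : ℕ) = (j : ℕ) + 1 then a (3 * (j : ℕ) + 2) else 0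
    let L2 : Matrix (Fin m) (Fin m) ℝ := fun i j =>
      if (i : ℕ) = j then 1 else if (i : ℕ) = (j : ℕ) + 1 then a (3 * (j : ℕ) + 3) else 0
    let U : Matrix (Fin m) (Fin m) ℝ := fun i j =>
      if (i : ℕ) = j then a (3 * (i : ℕ) + 1)
      else if (j : ℕ) = (i : ℕ) + 1 then 1 else 0
    let T : Matrix (Fin m) (Fin m) ℝ := L1 * L2 * U
    -- superdiagonal entries are 1
    (∀ i j : Fin m, (j : ℕ) = (i : ℕ) + 1 → T i j = 1) ∧
    -- tetradiagonal lower Hessenberg: zero outside the band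
    (∀ i j : Fin m, (i : ℕ) + 1 < (j : ℕ) ∨ (j : ℕ) + 2 < (i : ℕ) → T i j = 0) ∧
    -- diagonal entries
    (∀ h : 0 < m, T ⟨0, h⟩ ⟨0, h⟩ = a 1) ∧
    (∀ n : ℕ, ∀ h : 2 * n + 1 < m,
      T ⟨2 * n + 1, h⟩ ⟨2 * n + 1, h⟩ = a (6 * n + 2) + a (6 * n + 3) + a (6 * n + 4)) ∧
    (∀ n : ℕ, ∀ h : 2 * n + 2 < m,
      T ⟨2 * n + 2, h⟩ ⟨2 * n + 2, h⟩ = a (6 * n + 5) + a (6 * n + 6) + a (6 * n + 7)) ∧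
    -- first subdiagonal entries
    (∀ h : 1 < m, T ⟨1, h⟩ ⟨0, Nat.lt_of_succ_lt h⟩ = a 1 * (a 2 + a 3)) ∧
    (∀ n : ℕ, ∀ h : 2 * n + 2 < m,
      T ⟨2 * n + 2, h⟩ ⟨2 * n + 1, Nat.lt_of_succ_lt h⟩
        = a (6 * n + 3) * a (6 * n + 5) + a (6 * n + 4) * (a (6 * n + 5) + a (6 * n + 6))) ∧
    (∀ n : ℕ, ∀ h : 2 * n + 3 < m,
      T ⟨2 * n + 3, h⟩ ⟨2 * n + 2, Nat.lt_of_succ_lt h⟩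
        = a (6 * n + 6) * a (6 * n + 8) + a (6 * n + 7) * (a (6 * n + 8) + a (6 * n + 9))) ∧
    -- second subdiagonal entries
    (∀ n : ℕ, ∀ h : 2 * n + 2 < m,
      T ⟨2 * n + 2, h⟩ ⟨2 * n, by omega⟩ = a (6 * n + 1) * a (6 * n + 3) * a (6 * n + 5)) ∧
    (∀ n : ℕ, ∀ h : 2 * n + 3 < m,
      T ⟨2 * n + 3, h⟩ ⟨2 * n + 1, by omega⟩
        = a (6 * n + 4) * a (6 * n + 6) * a (6 * n + 8)) := by
  intro L1 L2 U T
  have hT : ∀ i j : Fin m, T i j = bidiagonalProduct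
      (fun k => a (3 * k + 2)) (fun k => a (3 * k + 3)) (fun k => a (3 * k + 1)) i j :=
    fun i j => by
      change ((unitLowerBidiagonal fun k => a (3 * k + 2)).submatrix Fin.val Fin.val
        * (unitLowerBidiagonal fun k => a (3 * k + 3)).submatrix Fin.val Fin.val
        * (upperBidiagonal fun k => a (3 * k + 1)).submatrix Fin.val Fin.val
          : Matrix (Fin m) (Fin m) ℝ) i j = _
      rw [← submatrix_bidiagonalProduct, submatrix_apply]
  refine ⟨fun i j h => ?_, fun i j h => ?_, fun _ => ?_, fun n _ => ?_, fun n _ => ?_, fun _ => ?_,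
    fun n _ => ?_, fun n _ => ?_, fun n _ => ?_, fun n _ => ?_⟩
  · rw [hT, h, bidiagonalProduct_apply_self_succ]
  · rw [hT, bidiagonalProduct_apply_eq_zero _ _ _ h]
  · rw [hT, bidiagonalProduct_apply_zero_zero]
  · rw [hT, bidiagonalProduct_apply_succ_succ]
    ring_nf
  · rw [hT, bidiagonalProduct_apply_succ_succ]
    ring_nf
  · rw [hT, bidiagonalProduct_apply_one_zero]
    ring
  · rw [hT, bidiagonalProduct_apply_add_two_succ]
    ring_nf
  · rw [hT, bidiagonalProduct_apply_add_two_succ]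
    ring_nf
  · rw [hT, bidiagonalProduct_apply_add_two_self]
    ring_nf
  · rw [hT, bidiagonalProduct_apply_add_two_self]
    ring_nf
end

section
/- For all n ∈ ℕ and real b₁, b₂ with the relevant hypergeometric values nonzero, the multiple Charlier bidiagonal entries satisfy the diagonal sum identity a_{6n+2} + a_{6n+3} + a_{6n+4} = 2n+1+b₂, where a_{6n+2} = ((n)ₙ(b₂-b₁)/(n+1)ₙ)·G(n,2n-1)/G(n,2n), a_{6n+3} = (2n+1)·G(n+1,2n+1)/G(n,2n), a_{6n+4} = b₂, with G(p,q) := ₁F₁(-p; -q; b₁-b₂), (x)ₖ the Pochhammer symbol, and (n)ₙ/(n+1)ₙ = n/(2n) = 1/2 for n ≥ 1 (interpret (0)₀/(1)₀ = 1 for n = 0). -/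
open Finset

/-- Pochhammer symbol `(x)_k = x (x+1) ⋯ (x+k-1)` for a real `x`. -/
noncomputable def poch (x : ℝ) (k : ℕ) : ℝ := ∏ i ∈ Finset.range k, (x + i)

/-- Terminating confluent hypergeometric sum `₁F₁(-p; -q; z)`. -/
noncomputable def F11 (p : ℕ) (q z : ℝ) : ℝ :=
  ∑ k ∈ Finset.range (p + 1), poch (-(p : ℝ)) k * z ^ k / (poch (-q) k * (Nat.factorial k))

/-!
For `n ≥ 1` the identity is the contiguous relation
`(b - a) z M(a; b+1; z) + b (b - 1) M(a-1; b-1; z) = b (b - 1) M(a; b; z)` of `M = ₁F₁`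
at `a = -n`, `b = -2n`, divided by `2n`, combined with `(n)ₙ / (n+1)ₙ = 1/2`.
The relation holds coefficientwise: after the shifts `(a-1)_{m+1} = (a-1)(a)_m` and
`(b)_{m+1} = (b)_m (b+m) = b (b+1)_m`, the coefficients of `z^{m+1}` agree by the linear
identity `(q - p)(m+1) + (p+1)(m-q) = (q+1)(m-p)` (with `a = -p`, `b = -q`).
-/

namespace Charlier

lemma poch_zero (x : ℝ) : poch x 0 = 1 := prod_range_zero _

lemma poch_succ_right (x : ℝ) (k : ℕ) : poch x (k + 1) = poch x k * (x + k) :=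
  prod_range_succ _ _

lemma poch_succ_left (x : ℝ) (k : ℕ) : poch x (k + 1) = x * poch (x + 1) k := by
  rw [poch, prod_range_succ', mul_comm, poch, Nat.cast_zero, add_zero]
  exact congrArg _ (prod_congr rfl fun i _ => by push_cast; ring)

lemma mul_poch_add_one (x : ℝ) (k : ℕ) : x * poch (x + 1) k = poch x k * (x + k) := by
  rw [← poch_succ_left, poch_succ_right]

lemma poch_ne_zero {x : ℝ} {k : ℕ} (h : ∀ i < k, x + i ≠ 0) : poch x k ≠ 0 :=
  prod_ne_zero_iff.2 fun i hi => h i (mem_range.1 hi)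

lemma poch_neg_natCast_of_lt {p k : ℕ} (h : p < k) : poch (-(p : ℝ)) k = 0 :=
  prod_eq_zero (mem_range.2 h) (by simp)

lemma poch_neg_ne_zero {q : ℝ} {k : ℕ} (h : (k : ℝ) ≤ q) : poch (-q) k ≠ 0 :=
  poch_ne_zero fun i hi => by
    have : (i : ℝ) < k := by exact_mod_cast hi
    linarith

noncomputable def F11Term (p : ℕ) (q z : ℝ) (k : ℕ) : ℝ :=
  poch (-(p : ℝ)) k * z ^ k / (poch (-q) k * k.factorial)

lemma F11_eq_sum_F11Term (p : ℕ) (q z : ℝ) :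
    F11 p q z = ∑ k ∈ range (p + 1), F11Term p q z k := rfl

lemma F11Term_zero (p : ℕ) (q z : ℝ) : F11Term p q z 0 = 1 := by
  simp [F11Term, poch_zero]

lemma F11Term_of_lt {p k : ℕ} (h : p < k) (q z : ℝ) : F11Term p q z k = 0 := by
  simp [F11Term, poch_neg_natCast_of_lt h]

lemma F11Term_contiguous (p m : ℕ) {q : ℝ} (hmq : (m : ℝ) < q) (z : ℝ) :
    (p - q) * z * F11Term p (q - 1) z m + q * (q + 1) * F11Term (p + 1) (q + 1) z (m + 1)
      = q * (q + 1) * F11Term p q z (m + 1) := by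
  have hq : 0 < q := lt_of_le_of_lt m.cast_nonneg hmq
  have hq1 : q + 1 ≠ 0 := by linarith
  have hmq' : -q + m ≠ 0 := by linarith
  have hC : poch (-q) m ≠ 0 := poch_neg_ne_zero hmq.le
  have hshift : -q * poch (-(q - 1)) m = poch (-q) m * (-q + m) := by
    rw [← poch_succ_right, poch_succ_left]; ring_nf
  have hB : poch (-(q - 1)) m = poch (-q) m * (-q + m) / -q := by
    rw [← hshift, mul_div_cancel_left₀ _ (neg_ne_zero.2 hq.ne')]
  have hnum : poch (-((p + 1 : ℕ) : ℝ)) (m + 1) = -(p + 1) * poch (-(p : ℝ)) m := by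
    rw [poch_succ_left]; push_cast; ring_nf
  have hden : poch (-(q + 1)) (m + 1) = -(q + 1) * poch (-q) m := by
    rw [poch_succ_left]; ring_nf
  rw [F11Term, F11Term, F11Term, hnum, hden, poch_succ_right (-(p : ℝ)), poch_succ_right (-q), hB]
  simp only [Nat.factorial_succ, Nat.cast_mul, Nat.cast_succ, pow_succ]
  field_simp
  ring

theorem F11_contiguous {p : ℕ} {q : ℝ} (hpq : (p : ℝ) < q) (z : ℝ) :
    (p - q) * z * F11 p (q - 1) z + q * (q + 1) * F11 (p + 1) (q + 1) z
      = q * (q + 1) * F11 p q z := by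
  have hhead : F11 (p + 1) (q + 1) z
      = 1 + ∑ m ∈ range (p + 1), F11Term (p + 1) (q + 1) z (m + 1) := by
    rw [F11_eq_sum_F11Term, sum_range_succ', F11Term_zero, add_comm]
  have hextend : F11 p q z = 1 + ∑ m ∈ range (p + 1), F11Term p q z (m + 1) := by
    rw [← F11Term_zero p q z, add_comm, ← sum_range_succ', sum_range_succ, F11Term_of_lt p.lt_succ_self,
      add_zero, F11_eq_sum_F11Term]
  calc (p - q) * z * F11 p (q - 1) z + q * (q + 1) * F11 (p + 1) (q + 1) z
      = q * (q + 1) + ∑ m ∈ range (p + 1),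
          ((p - q) * z * F11Term p (q - 1) z m + q * (q + 1) * F11Term (p + 1) (q + 1) z (m + 1)) := by
        rw [hhead, sum_add_distrib, F11_eq_sum_F11Term, mul_sum, mul_add, mul_sum]; ring
    _ = q * (q + 1) + ∑ m ∈ range (p + 1), q * (q + 1) * F11Term p q z (m + 1) := by
        refine congrArg _ (sum_congr rfl fun m hm => F11Term_contiguous p m ?_ z)
        have : (m : ℝ) ≤ p := by exact_mod_cast Nat.lt_succ_iff.1 (mem_range.1 hm)
        linarith
    _ = q * (q + 1) * F11 p q z := by rw [hextend, mul_add _ (1 : ℝ), mul_sum, mul_one]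

end Charlier

open Charlier in
theorem charlier_diagonal_sum_general (n : ℕ) (b₁ b₂ : ℝ)
    (hG1 : F11 n (2 * (n : ℝ)) (b₁ - b₂) ≠ 0) :
    poch (n : ℝ) n * (b₂ - b₁) / poch ((n : ℝ) + 1) n
        * (F11 n (2 * (n : ℝ) - 1) (b₁ - b₂) / F11 n (2 * (n : ℝ)) (b₁ - b₂))
      + (2 * (n : ℝ) + 1)
        * (F11 (n + 1) (2 * (n : ℝ) + 1) (b₁ - b₂) / F11 n (2 * (n : ℝ)) (b₁ - b₂))
      + b₂
    = 2 * (n : ℝ) + 1 + b₂ := by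
  rcases Nat.eq_zero_or_pos n with rfl | hn
  · simp [F11, poch, sum_range_succ, div_neg, add_left_comm (b₂ - b₁)]
  have hn0 : (n : ℝ) ≠ 0 := by positivity
  have hn1 : (1 : ℝ) ≤ n := by exact_mod_cast hn
  have hratio : poch (n : ℝ) n * (b₂ - b₁) / poch ((n : ℝ) + 1) n = (b₂ - b₁) / 2 := by
    have hpos : poch (n : ℝ) n ≠ 0 := poch_ne_zero fun i _ => by positivity
    have hdouble : poch ((n : ℝ) + 1) n = 2 * poch n n :=
      mul_left_cancel₀ hn0 (by rw [mul_poch_add_one]; ring)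
    rw [hdouble]
    field_simp
  have hrel := F11_contiguous (q := 2 * (n : ℝ)) (by linarith) (b₁ - b₂)
  have hkey : (b₂ - b₁) / 2 * F11 n (2 * (n : ℝ) - 1) (b₁ - b₂)
      + (2 * n + 1) * F11 (n + 1) (2 * (n : ℝ) + 1) (b₁ - b₂)
      = (2 * n + 1) * F11 n (2 * (n : ℝ)) (b₁ - b₂) :=
    mul_left_cancel₀ (mul_ne_zero two_ne_zero hn0) (by linear_combination hrel)
  rw [hratio]
  field_simp
  linear_combination 2 * hkey

theorem charlier_diagonal_sum (n : ℕ) (b₁ b₂ : ℝ)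
    (hG0 : F11 n (2 * (n : ℝ) - 1) (b₁ - b₂) ≠ 0)
    (hG1 : F11 n (2 * (n : ℝ)) (b₁ - b₂) ≠ 0)
    (hG2 : F11 (n + 1) (2 * (n : ℝ) + 1) (b₁ - b₂) ≠ 0) :
    poch (n : ℝ) n * (b₂ - b₁) / poch ((n : ℝ) + 1) n
        * (F11 n (2 * (n : ℝ) - 1) (b₁ - b₂) / F11 n (2 * (n : ℝ)) (b₁ - b₂))
      + (2 * (n : ℝ) + 1)
        * (F11 (n + 1) (2 * (n : ℝ) + 1) (b₁ - b₂) / F11 n (2 * (n : ℝ)) (b₁ - b₂))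
      + b₂
    = 2 * (n : ℝ) + 1 + b₂ :=
  charlier_diagonal_sum_general n b₁ b₂ hG1
end

section
/- For all n ∈ ℕ and real α₁, α₂ with all relevant quantities defined, the multiple Laguerre of first kind bidiagonal entries a_{6n+1} = α₁+1+n, a_{6n+2} = α₂-α₁+n, a_{6n+3} = α₁-α₂+n+1, a_{6n+4} = α₂+1+n, a_{6n+5} = n+1, a_{6n+6} = n+1 satisfy all eight factorization equations: (i) a₁ = 1+α₁; (ii) a_{6n+2}+a_{6n+3}+a_{6n+4} = 3n+2+α₂; (iii) a_{6n+5}+a_{6n+6}+a_{6n+7} = 3(n+1)+1+α₁; (iv) a₁(a₂+a₃) = α₁+1; (v) a_{6n+3}a_{6n+5}+a_{6n+4}(a_{6n+5}+a_{6n+6}) = 3(n+1)²+(n+1)(α₁+α₂); (vi) a_{6n+6}a_{6n+8}+a_{6n+7}(a_{6n+8}+a_{6n+9}) = 3(n+1)²+(n+1)(α₁+α₂+3)+α₁+1; (vii) a_{6n+1}a_{6n+3}a_{6n+5} = (n+1)(n+1+α₁)(n+1+α₁-α₂); (viii) a_{6n+4}a_{6n+6}a_{6n+8} = (n+1)(n+1+α₂)(n+1+α₂-α₁).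 -/
theorem laguerre_first_kind_factorization_equations (α₁ α₂ : ℝ) (a : ℕ → ℝ)
    (ha1 : ∀ n : ℕ, a (6 * n + 1) = α₁ + 1 + n)
    (ha2 : ∀ n : ℕ, a (6 * n + 2) = α₂ - α₁ + n)
    (ha3 : ∀ n : ℕ, a (6 * n + 3) = α₁ - α₂ + n + 1)
    (ha4 : ∀ n : ℕ, a (6 * n + 4) = α₂ + 1 + n)
    (ha5 : ∀ n : ℕ, a (6 * n + 5) = (n : ℝ) + 1)
    (ha6 : ∀ n : ℕ, a (6 * n + 6) = (n : ℝ) + 1) :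
    a 1 = 1 + α₁ ∧
    (∀ n : ℕ, a (6 * n + 2) + a (6 * n + 3) + a (6 * n + 4) = 3 * n + 2 + α₂) ∧
    (∀ n : ℕ, a (6 * n + 5) + a (6 * n + 6) + a (6 * n + 7) = 3 * ((n : ℝ) + 1) + 1 + α₁) ∧
    a 1 * (a 2 + a 3) = α₁ + 1 ∧
    (∀ n : ℕ, a (6 * n + 3) * a (6 * n + 5) + a (6 * n + 4) * (a (6 * n + 5) + a (6 * n + 6))
      = 3 * ((n : ℝ) + 1) ^ 2 + ((n : ℝ) + 1) * (α₁ + α₂)) ∧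
    (∀ n : ℕ, a (6 * n + 6) * a (6 * n + 8) + a (6 * n + 7) * (a (6 * n + 8) + a (6 * n + 9))
      = 3 * ((n : ℝ) + 1) ^ 2 + ((n : ℝ) + 1) * (α₁ + α₂ + 3) + α₁ + 1) ∧
    (∀ n : ℕ, a (6 * n + 1) * a (6 * n + 3) * a (6 * n + 5)
      = ((n : ℝ) + 1) * ((n : ℝ) + 1 + α₁) * ((n : ℝ) + 1 + α₁ - α₂)) ∧
    (∀ n : ℕ, a (6 * n + 4) * a (6 * n + 6) * a (6 * n + 8)
      = ((n : ℝ) + 1) * ((n : ℝ) + 1 + α₂) * ((n : ℝ) + 1 + α₂ - α₁)) := by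
  have ha7 (n : ℕ) : a (6 * n + 7) = α₁ + 1 + (n + 1) := by
    rw [show 6 * n + 7 = 6 * (n + 1) + 1 by ring, ha1]; push_cast; ring
  have ha8 (n : ℕ) : a (6 * n + 8) = α₂ - α₁ + (n + 1) := by
    rw [show 6 * n + 8 = 6 * (n + 1) + 2 by ring, ha2]; push_cast; ring
  have ha9 (n : ℕ) : a (6 * n + 9) = α₁ - α₂ + (n + 1) + 1 := by
    rw [show 6 * n + 9 = 6 * (n + 1) + 3 by ring, ha3]; push_cast; ring
  have a_one : a 1 = 1 + α₁ := by simpa [add_comm] using ha1 0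
  have a_two : a 2 = α₂ - α₁ := by simpa using ha2 0
  have a_three : a 3 = α₁ - α₂ + 1 := by simpa using ha3 0
  refine ⟨a_one, fun n => ?_, fun n => ?_, by rw [a_one, a_two, a_three]; ring,
    fun n => ?_, fun n => ?_, fun n => ?_, fun n => ?_⟩
  · rw [ha2, ha3, ha4]; ring
  · rw [ha5, ha6, ha7]; ring
  · rw [ha3, ha4, ha5, ha6]; ring
  · rw [ha6, ha7, ha8, ha9]; ring
  · rw [ha1, ha3, ha5]; ring
  · rw [ha4, ha6, ha8]; ring
end

section
/- The multiple Laguerre of first kind recurrence coefficients arise as limits of the Jacobi–Piñeiro ones: for each fixed m ∈ ℕ and α₁, α₂ > -1, lim_{β→∞} β·b_{2m}(α₁,α₂,β) = 3m+1+α₁, lim_{β→∞} β·b_{2m+1}(α₁,α₂,β) = 3m+2+α₂, lim_{β→∞} β³·d_{2m}(α₁,α₂,β) = m(m+α₁)(m+α₁-α₂), and lim_{β→∞} β³·d_{2m+1}(α₁,α₂,β) = m(m+α₂)(m+α₂-α₁), where b, d are the explicit Jacobi–Piñeiro rational expressions. -/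
open Filter

/-- Auxiliary function `A(n₁,n₂)` for the Jacobi–Piñeiro recursion
(the Hahn `A` with the `N`-factor removed). -/
noncomputable def JPA (α₁ α₂ β n₁ n₂ : ℝ) : ℝ :=
  n₁ * (n₁ + n₂ + α₂ + β) * (n₁ + n₂ + β)
    / ((n₁ + 2 * n₂ + α₂ + β) * (2 * n₁ + n₂ + α₁ + β) * (2 * n₁ + n₂ + α₁ + β + 1))

/-- Auxiliary function `B(n₁,n₂)` for the Jacobi–Piñeiro recursion. -/
noncomputable def JPB (α₁ α₂ β n₁ n₂ : ℝ) : ℝ :=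
  (n₁ + α₁ - α₂) * (n₁ + n₂ + α₁ + β) * (n₁ + n₂ + β - 1)
    / ((n₁ + 2 * n₂ + α₂ + β - 1) * (2 * n₁ + n₂ + α₁ + β) * (2 * n₁ + n₂ + α₁ + β - 1))

/-- Auxiliary function `C(n₁,n₂)` for the Jacobi–Piñeiro recursion. -/
noncomputable def JPC (α₁ α₂ β n₁ n₂ : ℝ) : ℝ :=
  (n₁ + α₁) * (n₁ + n₂ + α₁ + β - 1) * (n₁ + n₂ + α₂ + β - 1)
    / ((n₁ + 2 * n₂ + α₂ + β - 2) * (2 * n₁ + n₂ + α₁ + β - 2) * (2 * n₁ + n₂ + α₁ + β - 1))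

/-- Jacobi–Piñeiro recursion coefficient `b_{2m}`. -/
noncomputable def JPb2 (α₁ α₂ β : ℝ) (m : ℕ) : ℝ :=
  JPA α₁ α₂ β m m + JPA α₂ (α₁ + 1) β m m + JPC α₁ α₂ β (m + 1) (m + 1)

/-- Jacobi–Piñeiro recursion coefficient `b_{2m+1}`. -/
noncomputable def JPb2p1 (α₁ α₂ β : ℝ) (m : ℕ) : ℝ :=
  JPA α₂ α₁ β m (m + 1) + JPA α₁ (α₂ + 1) β (m + 1) m + JPC α₂ α₁ β (m + 1) (m + 2)

/-- Jacobi–Piñeiro recursion coefficient `d_{2m}`. -/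
noncomputable def JPd2 (α₁ α₂ β : ℝ) (m : ℕ) : ℝ :=
  JPA α₁ α₂ β m m * JPB α₁ α₂ β m m * JPC α₁ α₂ β m m

/-- Jacobi–Piñeiro recursion coefficient `d_{2m+1}`. -/
noncomputable def JPd2p1 (α₁ α₂ β : ℝ) (m : ℕ) : ℝ :=
  JPA α₂ α₁ β m (m + 1) * JPB α₂ α₁ β m (m + 1) * JPC α₂ α₁ β m (m + 1)

/-! Each of `JPA`, `JPB`, `JPC` is `κ · (β + ·)(β + ·) / ((β + ·)(β + ·)(β + ·))` with `κ`
independent of `β`, so multiplying it by `β` gives a function asymptotically equivalent to the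
constant `κ`. The coefficients `b` are sums of three such terms, and `β³ d` is a product of
three of them, so the limits are sums and products of the constants `κ`. -/

open Asymptotics Topology

lemma isEquivalent_const_add_atTop (c : ℝ) : (fun x : ℝ => c + x) ~[atTop] id :=
  IsEquivalent.refl.const_add_of_norm_tendsto_atTop tendsto_norm_atTop_atTop

lemma tendsto_mul_cubic_ratio_atTop (a b c d e f : ℝ) :
    Tendsto (fun x : ℝ => x * (a * (b + x) * (c + x) / ((d + x) * (e + x) * (f + x))))
      atTop (𝓝 a) := by
  have hequiv : (fun x : ℝ => x * (a * (b + x) * (c + x) / ((d + x) * (e + x) * (f + x))))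
      ~[atTop] fun x => x * (a * x * x / (x * x * x)) :=
    IsEquivalent.refl.mul <| ((IsEquivalent.refl.mul (isEquivalent_const_add_atTop b)).mul
      (isEquivalent_const_add_atTop c)).div <| ((isEquivalent_const_add_atTop d).mul
      (isEquivalent_const_add_atTop e)).mul (isEquivalent_const_add_atTop f)
  refine hequiv.tendsto_nhds_iff.2 (tendsto_const_nhds.congr' ?_)
  filter_upwards [eventually_ne_atTop 0] with x hx
  field_simp

lemma tendsto_mul_JPA_atTop (α₁ α₂ n₁ n₂ : ℝ) :
    Tendsto (fun β => β * JPA α₁ α₂ β n₁ n₂) atTop (𝓝 n₁) := by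
  convert tendsto_mul_cubic_ratio_atTop n₁ (n₁ + n₂ + α₂) (n₁ + n₂) (n₁ + 2 * n₂ + α₂)
    (2 * n₁ + n₂ + α₁) (2 * n₁ + n₂ + α₁ + 1) using 3 with β
  unfold JPA; ring

lemma tendsto_mul_JPB_atTop (α₁ α₂ n₁ n₂ : ℝ) :
    Tendsto (fun β => β * JPB α₁ α₂ β n₁ n₂) atTop (𝓝 (n₁ + α₁ - α₂)) := by
  convert tendsto_mul_cubic_ratio_atTop (n₁ + α₁ - α₂) (n₁ + n₂ + α₁) (n₁ + n₂ - 1)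
    (n₁ + 2 * n₂ + α₂ - 1) (2 * n₁ + n₂ + α₁) (2 * n₁ + n₂ + α₁ - 1) using 3 with β
  unfold JPB; ring

lemma tendsto_mul_JPC_atTop (α₁ α₂ n₁ n₂ : ℝ) :
    Tendsto (fun β => β * JPC α₁ α₂ β n₁ n₂) atTop (𝓝 (n₁ + α₁)) := by
  convert tendsto_mul_cubic_ratio_atTop (n₁ + α₁) (n₁ + n₂ + α₁ - 1) (n₁ + n₂ + α₂ - 1)
    (n₁ + 2 * n₂ + α₂ - 2) (2 * n₁ + n₂ + α₁ - 2) (2 * n₁ + n₂ + α₁ - 1) using 3 with β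
  unfold JPC; ring

theorem laguerre_first_kind_as_limit_of_jacobi_pineiro_general (m : ℕ) (α₁ α₂ : ℝ) :
    Tendsto (fun β : ℝ => β * JPb2 α₁ α₂ β m) atTop (nhds (3 * (m : ℝ) + 1 + α₁)) ∧
    Tendsto (fun β : ℝ => β * JPb2p1 α₁ α₂ β m) atTop (nhds (3 * (m : ℝ) + 2 + α₂)) ∧
    Tendsto (fun β : ℝ => β ^ 3 * JPd2 α₁ α₂ β m) atTop
      (nhds ((m : ℝ) * ((m : ℝ) + α₁) * ((m : ℝ) + α₁ - α₂))) ∧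
    Tendsto (fun β : ℝ => β ^ 3 * JPd2p1 α₁ α₂ β m) atTop
      (nhds ((m : ℝ) * ((m : ℝ) + α₂) * ((m : ℝ) + α₂ - α₁))) := by
  refine ⟨?_, ?_, ?_, ?_⟩
  · convert ((tendsto_mul_JPA_atTop α₁ α₂ m m).add (tendsto_mul_JPA_atTop α₂ (α₁ + 1) m m)).add
      (tendsto_mul_JPC_atTop α₁ α₂ (m + 1) (m + 1)) using 2 with β
    · unfold JPb2; ring
    · ring
  · convert ((tendsto_mul_JPA_atTop α₂ α₁ m (m + 1)).add
      (tendsto_mul_JPA_atTop α₁ (α₂ + 1) (m + 1) m)).add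
      (tendsto_mul_JPC_atTop α₂ α₁ (m + 1) (m + 2)) using 2 with β
    · unfold JPb2p1; ring
    · ring
  · convert ((tendsto_mul_JPA_atTop α₁ α₂ m m).mul (tendsto_mul_JPB_atTop α₁ α₂ m m)).mul
      (tendsto_mul_JPC_atTop α₁ α₂ m m) using 2 with β
    · unfold JPd2; ring
    · ring
  · convert ((tendsto_mul_JPA_atTop α₂ α₁ m (m + 1)).mul
      (tendsto_mul_JPB_atTop α₂ α₁ m (m + 1))).mul (tendsto_mul_JPC_atTop α₂ α₁ m (m + 1))
      using 2 with β
    · unfold JPd2p1; ring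
    · ring

theorem laguerre_first_kind_as_limit_of_jacobi_pineiro (m : ℕ) (α₁ α₂ : ℝ)
    (hα₁ : α₁ > -1) (hα₂ : α₂ > -1) :
    Tendsto (fun β : ℝ => β * JPb2 α₁ α₂ β m) atTop (nhds (3 * (m : ℝ) + 1 + α₁)) ∧
    Tendsto (fun β : ℝ => β * JPb2p1 α₁ α₂ β m) atTop (nhds (3 * (m : ℝ) + 2 + α₂)) ∧
    Tendsto (fun β : ℝ => β ^ 3 * JPd2 α₁ α₂ β m) atTop
      (nhds ((m : ℝ) * ((m : ℝ) + α₁) * ((m : ℝ) + α₁ - α₂))) ∧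
    Tendsto (fun β : ℝ => β ^ 3 * JPd2p1 α₁ α₂ β m) atTop
      (nhds ((m : ℝ) * ((m : ℝ) + α₂) * ((m : ℝ) + α₂ - α₁))) :=
  laguerre_first_kind_as_limit_of_jacobi_pineiro_general m α₁ α₂
end

section
/- For real parameters α₁, α₂, β > -1 and integers n, N with 0 ≤ 2n ≤ N, and with the semi-band condition -1 < α₁ - α₂ < 0, the terminating hypergeometric value ₃F₂(-n, -N, α₂-α₁-n; -2n, α₂+β+n+2; 1) = Σ_{k=0}^{n} ((-n)_k(-N)_k(α₂-α₁-n)_k)/((-2n)_k(α₂+β+n+2)_k·k!) is strictly positive; indeed every summand is nonnegative and the k = 0 term equals 1. -/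
/-!
Each of `-n`, `-N`, `α₂ - α₁ - n` and `-2n` stays negative over the first `n` Pochhammer
factors (for `α₂ - α₁ - n` because `α₂ - α₁ < 1`), so for `k ≤ n` the three upper and the one
lower Pochhammer symbol all have sign `(-1)^k`; the remaining lower parameter
`α₂ + β + n + 2` is positive. Hence every term of the terminating series is nonnegative, and
the sum is at least its `k = 0` term, which is `1`.
-/

open Finset

lemma poch_pos {x : ℝ} (hx : 0 < x) (k : ℕ) : 0 < poch x k :=
  prod_pos fun i _ => by positivity

lemma neg_one_pow_mul_poch_pos {x : ℝ} {k : ℕ} (h : x + k < 1) : 0 < (-1) ^ k * poch x k := by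
  have hsign := prod_neg (s := range k) fun i : ℕ => x + i
  rw [card_range] at hsign
  rw [poch, ← hsign]
  refine prod_pos fun i hi => ?_
  have : (i : ℝ) + 1 ≤ k := by exact_mod_cast mem_range.mp hi
  linarith

/-- The `k`-th term of the series `₃F₂(a₁, a₂, a₃; b₁, b₂; 1)`. -/
noncomputable def hypergeomTerm₃₂ (a₁ a₂ a₃ b₁ b₂ : ℝ) (k : ℕ) : ℝ :=
  poch a₁ k * poch a₂ k * poch a₃ k / (poch b₁ k * poch b₂ k * k.factorial)

lemma hypergeomTerm₃₂_zero (a₁ a₂ a₃ b₁ b₂ : ℝ) : hypergeomTerm₃₂ a₁ a₂ a₃ b₁ b₂ 0 = 1 := by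
  simp [hypergeomTerm₃₂, poch]

lemma hypergeomTerm₃₂_nonneg {a₁ a₂ a₃ b₁ b₂ : ℝ} {k : ℕ} (ha₁ : a₁ + k < 1) (ha₂ : a₂ + k < 1)
    (ha₃ : a₃ + k < 1) (hb₁ : b₁ + k < 1) (hb₂ : 0 < b₂) :
    0 ≤ hypergeomTerm₃₂ a₁ a₂ a₃ b₁ b₂ k := by
  set s : ℝ := (-1) ^ k
  have hs : s * s = 1 := by rw [← mul_pow]; simp
  -- the four signs `s` cancel in pairs
  have hsigns : hypergeomTerm₃₂ a₁ a₂ a₃ b₁ b₂ k = (s * poch a₁ k) * (s * poch a₂ k) *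
      (s * poch a₃ k) / ((s * poch b₁ k) * poch b₂ k * k.factorial) := by
    rw [hypergeomTerm₃₂, ← one_mul (_ * _ * _), ← hs,
      ← mul_div_mul_left _ _ (pow_ne_zero k (neg_ne_zero.mpr one_ne_zero))]
    ring
  rw [hsigns]
  have hnum := mul_pos (mul_pos (neg_one_pow_mul_poch_pos ha₁) (neg_one_pow_mul_poch_pos ha₂))
    (neg_one_pow_mul_poch_pos ha₃)
  have hden := mul_pos (neg_one_pow_mul_poch_pos hb₁) (poch_pos hb₂ k)
  exact div_nonneg hnum.le (by positivity)

theorem hahn_hypergeometric_positivity_general (n N : ℕ) (hN : 2 * n ≤ N)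
    (α₁ α₂ β : ℝ) (hα₂ : α₂ > -1) (hβ : β > -1)
    (hlow : -1 < α₁ - α₂) :
    0 < ∑ k ∈ Finset.range (n + 1),
        poch (-(n : ℝ)) k * poch (-(N : ℝ)) k * poch (α₂ - α₁ - n) k
          / (poch (-(2 * (n : ℝ))) k * poch (α₂ + β + n + 2) k * (Nat.factorial k)) ∧
    (∀ k ≤ n,
      0 ≤ poch (-(n : ℝ)) k * poch (-(N : ℝ)) k * poch (α₂ - α₁ - n) k
          / (poch (-(2 * (n : ℝ))) k * poch (α₂ + β + n + 2) k * (Nat.factorial k))) ∧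
    poch (-(n : ℝ)) 0 * poch (-(N : ℝ)) 0 * poch (α₂ - α₁ - n) 0
        / (poch (-(2 * (n : ℝ))) 0 * poch (α₂ + β + n + 2) 0 * (Nat.factorial 0)) = 1 := by
  have hterm : ∀ k ≤ n,
      0 ≤ hypergeomTerm₃₂ (-n) (-N) (α₂ - α₁ - n) (-(2 * n)) (α₂ + β + n + 2) k := by
    intro k hk
    have hkn : (k : ℝ) ≤ n := by exact_mod_cast hk
    have hnN : (2 * n : ℝ) ≤ N := by exact_mod_cast hN
    have hn : (0 : ℝ) ≤ n := n.cast_nonneg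
    exact hypergeomTerm₃₂_nonneg (by linarith) (by linarith) (by linarith) (by linarith)
      (by linarith)
  refine ⟨?_, hterm, hypergeomTerm₃₂_zero ..⟩
  show 0 < ∑ k ∈ range (n + 1),
    hypergeomTerm₃₂ (-n) (-N) (α₂ - α₁ - n) (-(2 * n)) (α₂ + β + n + 2) k
  rw [sum_range_succ', hypergeomTerm₃₂_zero]
  have htail := sum_nonneg fun k (hk : k ∈ range n) => hterm (k + 1) (mem_range.mp hk)
  linarith

theorem hahn_hypergeometric_positivity (n N : ℕ) (hN : 2 * n ≤ N)
    (α₁ α₂ β : ℝ) (hα₁ : α₁ > -1) (hα₂ : α₂ > -1) (hβ : β > -1)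
    (hlow : -1 < α₁ - α₂) (hhigh : α₁ - α₂ < 0) :
    0 < ∑ k ∈ Finset.range (n + 1),
        poch (-(n : ℝ)) k * poch (-(N : ℝ)) k * poch (α₂ - α₁ - n) k
          / (poch (-(2 * (n : ℝ))) k * poch (α₂ + β + n + 2) k * (Nat.factorial k)) ∧
    (∀ k ≤ n,
      0 ≤ poch (-(n : ℝ)) k * poch (-(N : ℝ)) k * poch (α₂ - α₁ - n) k
          / (poch (-(2 * (n : ℝ))) k * poch (α₂ + β + n + 2) k * (Nat.factorial k))) ∧
    poch (-(n : ℝ)) 0 * poch (-(N : ℝ)) 0 * poch (α₂ - α₁ - n) 0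
        / (poch (-(2 * (n : ℝ))) 0 * poch (α₂ + β + n + 2) 0 * (Nat.factorial 0)) = 1 :=
  hahn_hypergeometric_positivity_general n N hN α₁ α₂ β hα₂ hβ hlow
end

section
/- For real β > 0, 0 < c₁, c₂ < 1 with c₁ ≠ c₂, and every n ≥ 1, the multiple Meixner first-kind second-subdiagonal coefficients d_{2n} = n(β+2n-2)(β+2n-1)c₁(c₁-c₂)/((1-c₁)³(1-c₂)) and d_{2n+1} = n(β+2n-1)(β+2n)c₂(c₂-c₁)/((1-c₁)(1-c₂)³) have opposite signs; hence the Meixner first-kind recurrence matrix is never nonnegative and cannot admit a positive bidiagonal factorization. -/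
/-! Both coefficients are a positive factor times `c₁ - c₂` and `c₂ - c₁` respectively, so their
product is a negative multiple of `(c₁ - c₂) ^ 2`. -/

theorem mul_sub_mul_mul_sub_neg {α : Type*} [CommRing α] [LinearOrder α] [IsStrictOrderedRing α]
    {a b x y : α} (ha : 0 < a) (hb : 0 < b) (hxy : x ≠ y) :
    a * (x - y) * (b * (y - x)) < 0 := by
  have hsq : 0 < (x - y) ^ 2 := sq_pos_of_ne_zero (sub_ne_zero.2 hxy)
  calc a * (x - y) * (b * (y - x)) = -(a * b * (x - y) ^ 2) := by ring
    _ < 0 := neg_neg_of_pos (mul_pos (mul_pos ha hb) hsq)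

theorem meixner_first_kind_no_PBF (β c₁ c₂ : ℝ) (hβ : β > 0)
    (hc₁0 : 0 < c₁) (hc₁1 : c₁ < 1) (hc₂0 : 0 < c₂) (hc₂1 : c₂ < 1) (hne : c₁ ≠ c₂)
    (n : ℕ) (hn : 1 ≤ n) :
    ((n : ℝ) * (β + 2 * n - 2) * (β + 2 * n - 1) * c₁ * (c₁ - c₂)
        / ((1 - c₁) ^ 3 * (1 - c₂)))
      * ((n : ℝ) * (β + 2 * n - 1) * (β + 2 * n) * c₂ * (c₂ - c₁)
        / ((1 - c₁) * (1 - c₂) ^ 3))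
      < 0 := by
  have hn' : (1 : ℝ) ≤ n := by exact_mod_cast hn
  have h₀ : 0 < β + 2 * n - 2 := by linarith
  have h₁ : 0 < β + 2 * n - 1 := by linarith
  have h₂ : 0 < β + 2 * n := by linarith
  have hd₁ : 0 < 1 - c₁ := sub_pos.2 hc₁1
  have hd₂ : 0 < 1 - c₂ := sub_pos.2 hc₂1
  rw [mul_div_right_comm _ (c₁ - c₂), mul_div_right_comm _ (c₂ - c₁)]
  exact mul_sub_mul_mul_sub_neg (by positivity) (by positivity) hne
end

section
/- For real b₁ ≠ b₂ and n ∈ ℕ, the terminating confluent hypergeometric sums satisfy the three-term contiguous relation implied by the Charlier diagonal identity: letting z = b₁ - b₂ and F(p,q) = ₁F₁(-p;-q;z) = Σ_{k=0}^{p} (-p)_k z^k/((-q)_k k!), one has for n ≥ 1 that ((n)ₙ(b₂-b₁)/(n+1)ₙ)·F(n,2n-1) + (2n+1)·F(n+1,2n+1) + b₂·F(n,2n) = (2n+1+b₂)·F(n,2n), equivalently (using (n)ₙ/(n+1)ₙ = 1/2) (2n+1)·F(n+1,2n+1) - (2n+1)·F(n,2n) = (z/2)·F(n,2n-1). -/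
open Finset

lemma poch_zero (x : ℝ) : poch x 0 = 1 := by simp [poch]

lemma poch_succ (x : ℝ) (k : ℕ) : poch x (k+1) = poch x k * (x + k) :=
  Finset.prod_range_succ _ _

lemma poch_succ' (x : ℝ) (k : ℕ) : poch x (k+1) = x * poch (x+1) k := by
  rw [poch, Finset.prod_range_succ', poch, mul_comm]
  simp only [Nat.cast_zero, add_zero]
  congr 1
  refine Finset.prod_congr rfl fun i _ => ?_
  push_cast; ring

lemma poch_ne_zero (x : ℝ) (k : ℕ) (h : ∀ i < k, x + i ≠ 0) : poch x k ≠ 0 :=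
  Finset.prod_ne_zero_iff.mpr (fun i hi => h i (Finset.mem_range.mp hi))

lemma poch_neg_self (n : ℕ) : poch (-(n : ℝ)) (n+1) = 0 := by
  rw [poch_succ]; simp

lemma key_term (n j : ℕ) (hn : 1 ≤ n) (hj : j ≤ n) (z : ℝ) :
    (2 * (n : ℝ) + 1) *
        (poch (-((n:ℝ)+1)) (j+1) * z ^ (j+1) /
            (poch (-(2*(n:ℝ)+1)) (j+1) * (Nat.factorial (j+1)))
          - poch (-(n:ℝ)) (j+1) * z ^ (j+1) /
            (poch (-(2*(n:ℝ))) (j+1) * (Nat.factorial (j+1))))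
      = z / 2 * (poch (-(n:ℝ)) j * z ^ j / (poch (-(2*(n:ℝ)-1)) j * (Nat.factorial j))) := by
  have hn' : (1:ℝ) ≤ (n:ℝ) := by exact_mod_cast hn
  have hjn : (j:ℝ) ≤ (n:ℝ) := by exact_mod_cast hj
  set A := poch (-(n:ℝ)) j with hA
  set B := poch (-(2*(n:ℝ)-1)) j with hB
  set Q := poch (-(2*(n:ℝ))) j with hQ
  have h1 : poch (-((n:ℝ)+1)) (j+1) = -((n:ℝ)+1) * A := by
    rw [poch_succ', show (-((n:ℝ)+1) + 1) = -(n:ℝ) by ring]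
  have h2 : poch (-(n:ℝ)) (j+1) = A * (-(n:ℝ) + j) := poch_succ _ _
  have h3 : poch (-(2*(n:ℝ))) (j+1) = -(2*(n:ℝ)) * B := by
    rw [poch_succ', show (-(2*(n:ℝ)) + 1) = -(2*(n:ℝ)-1) by ring]
  have h4 : poch (-(2*(n:ℝ)+1)) (j+1) = -(2*(n:ℝ)+1) * Q := by
    rw [poch_succ', show (-(2*(n:ℝ)+1) + 1) = -(2*(n:ℝ)) by ring]
  have h5 : Q * (-(2*(n:ℝ)) + j) = -(2*(n:ℝ)) * B := by
    rw [← poch_succ, h3]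
  have hd : (-(2*(n:ℝ)) + j) ≠ 0 := by intro h; nlinarith
  have hBne : B ≠ 0 := by
    refine poch_ne_zero _ _ fun i hi => ?_
    have : (i:ℝ) + 1 ≤ (j:ℝ) := by exact_mod_cast hi
    intro h; nlinarith
  have hQne : Q ≠ 0 := by
    refine poch_ne_zero _ _ fun i hi => ?_
    have : (i:ℝ) + 1 ≤ (j:ℝ) := by exact_mod_cast hi
    intro h; nlinarith
  have h2n : -(2*(n:ℝ)) ≠ 0 := by nlinarith
  have hBeq : B = Q * (-(2*(n:ℝ)) + j) / (-(2*(n:ℝ))) := by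
    rw [eq_div_iff h2n]; linear_combination -h5
  have hfac : (Nat.factorial j : ℝ) ≠ 0 := by
    exact_mod_cast (Nat.factorial_ne_zero j)
  have hj1 : ((j:ℝ) + 1) ≠ 0 := by positivity
  have h2n1 : (2*(n:ℝ)+1) ≠ 0 := by nlinarith
  have hf1 : ((Nat.factorial (j+1) : ℕ) : ℝ) ≠ 0 := by
    exact_mod_cast (Nat.factorial_ne_zero (j+1))
  have hfs : ((Nat.factorial (j+1) : ℕ) : ℝ) = ((j:ℝ)+1) * (Nat.factorial j : ℝ) := by
    push_cast [Nat.factorial_succ]; ring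
  rw [h1, h2, h3, h4]
  have hE1 : (-(2*(n:ℝ)+1) * Q * ((Nat.factorial (j+1) : ℕ) : ℝ)) ≠ 0 :=
    mul_ne_zero (mul_ne_zero (neg_ne_zero.mpr h2n1) hQne) hf1
  have hE2 : (-(2*(n:ℝ)) * B * ((Nat.factorial (j+1) : ℕ) : ℝ)) ≠ 0 :=
    mul_ne_zero (mul_ne_zero h2n hBne) hf1
  have hW : (B * ((Nat.factorial j : ℕ) : ℝ)) ≠ 0 := mul_ne_zero hBne hfac
  rw [div_sub_div _ _ hE1 hE2]
  simp only [← mul_div_assoc]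
  rw [div_eq_div_iff (mul_ne_zero hE1 hE2) hW, hfs]
  linear_combination (2*(n:ℝ)+1) * A * z^(j+1) * ((j:ℝ)+1) * (Nat.factorial j : ℝ)
    * B * (Nat.factorial j : ℝ) * ((n:ℝ)+1) * h5

lemma key2 (n : ℕ) (hn : 1 ≤ n) (z : ℝ) :
    (2*(n:ℝ)+1) * (F11 (n+1) (2*(n:ℝ)+1) z - F11 n (2*(n:ℝ)) z)
      = z/2 * F11 n (2*(n:ℝ)-1) z := by
  unfold F11
  simp only [Nat.cast_add, Nat.cast_one]
  have hext : ∑ k ∈ range (n+1), poch (-(n:ℝ)) k * z^k / (poch (-(2*(n:ℝ))) k * (Nat.factorial k))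
      = ∑ k ∈ range (n+1+1), poch (-(n:ℝ)) k * z^k / (poch (-(2*(n:ℝ))) k * (Nat.factorial k)) := by
    rw [Finset.sum_range_succ _ (n+1), poch_neg_self]
    simp
  rw [hext, ← Finset.sum_sub_distrib, Finset.mul_sum, Finset.mul_sum,
    Finset.sum_range_succ']
  simp only [poch_zero, pow_zero, Nat.factorial_zero, Nat.cast_one, Nat.cast_zero,
    mul_one, one_mul, div_one, sub_self, mul_zero, add_zero]
  refine Finset.sum_congr rfl fun j hj => ?_
  exact key_term n j hn (Nat.lt_succ_iff.mp (Finset.mem_range.mp hj)) z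

theorem charlier_contiguous_relation (n : ℕ) (hn : 1 ≤ n) (b₁ b₂ : ℝ) (hne : b₁ ≠ b₂) :
    (poch (n : ℝ) n * (b₂ - b₁) / poch ((n : ℝ) + 1) n
          * F11 n (2 * (n : ℝ) - 1) (b₁ - b₂)
        + (2 * (n : ℝ) + 1) * F11 (n + 1) (2 * (n : ℝ) + 1) (b₁ - b₂)
        + b₂ * F11 n (2 * (n : ℝ)) (b₁ - b₂)
      = (2 * (n : ℝ) + 1 + b₂) * F11 n (2 * (n : ℝ)) (b₁ - b₂)) ∧
    ((2 * (n : ℝ) + 1) * (F11 (n + 1) (2 * (n : ℝ) + 1) (b₁ - b₂)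
          - F11 n (2 * (n : ℝ)) (b₁ - b₂))
      = (b₁ - b₂) / 2 * F11 n (2 * (n : ℝ) - 1) (b₁ - b₂)) := by
  have hn' : (1:ℝ) ≤ (n:ℝ) := by exact_mod_cast hn
  have hn0 : (n:ℝ) ≠ 0 := by linarith
  have hk := key2 n hn (b₁ - b₂)
  have hpnn : poch (n:ℝ) n ≠ 0 := by
    refine poch_ne_zero _ _ fun i hi => ?_
    have : (0:ℝ) ≤ (i:ℝ) := by positivity
    intro h; nlinarith
  have hp : poch ((n:ℝ)+1) n = 2 * poch (n:ℝ) n := by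
    apply mul_left_cancel₀ hn0
    rw [← poch_succ', poch_succ]
    ring
  have hc : poch (n:ℝ) n * (b₂ - b₁) / poch ((n:ℝ)+1) n = (b₂ - b₁) / 2 := by
    rw [hp]
    field_simp
  constructor
  · rw [hc]
    linear_combination hk
  · linear_combination hk
end
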